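/- Let K, L ⊆ S and s0 ∈ S. Then μ_{s0}{ω : ω visits K infinitely often and visits L only finitely often} > 0 if and only if there exists a closed communicating class C of P such that C ∩ K ≠ ∅, C ∩ L = ∅, and some state of C is accessible from s0. (This is the content of Proposition 1 of the paper: the Rabin acceptance condition holds with positive probability if and only if some accessible recurrent class meets the set K to be visited infinitely often and avoids the set L to be visited finitely often; recurrent classes of a finite Markov chain are its closed communicating classes.) -/

import Mathlib

/-!
Two facts about a finite chain drive the argument. If a set `A` is accessible from every
state, then for some `N` and `r < 1` the chain avoids `A` during `q * N` consecutive steps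
with probability at most `r ^ q`, whatever happened before; hence `A` is visited infinitely
often almost surely. And from every state some essential state is accessible, the states
accessible from an essential state forming a closed communicating class.

Applied to the essential states, and then to `{k} ∪ Cᶜ` for each class `C` and `k ∈ C`,
this shows that almost every trajectory enters a closed communicating class, never leaves
it and visits every state of it infinitely often. So the Rabin condition holds on a
trajectory exactly when the class it ends up in meets `K` and avoids `L`; conversely every
class accessible from `s0` is entered with positive probability, through a cylinder of
positive measure.
-/

open MeasureTheory Finset Set
open scoped Classical

/-- `μ` is the path measure of the time-homogeneous Markov chain with transition
matrix `P` started at `s0`: it assigns to each finite cylinder the product of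
transition probabilities. -/
def IsPathMeasure {S : Type*} [Fintype S] [DecidableEq S] [MeasurableSpace S]
    (P : S → S → ℝ) (s0 : S) (μ : Measure (ℕ → S)) : Prop :=
  ∀ (n : ℕ) (f : ℕ → S),
    μ {ω | ∀ i ≤ n, ω i = f i} =
      if f 0 = s0 then ENNReal.ofReal (∏ i ∈ Finset.range n, P (f i) (f (i + 1))) else 0

/-- `s'` is accessible from `s`: some matrix power of `P` has positive `(s, s')` entry. -/
def Accessible {S : Type*} [Fintype S] [DecidableEq S] (P : S → S → ℝ) (s s' : S) : Prop :=
  ∃ n : ℕ, 0 < ((Matrix.of P) ^ n) s s'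

/-- `C` is a closed set of the chain: from any state of `C`, the chain stays in `C`. -/
def IsClosedSet {S : Type*} [Fintype S] (P : S → S → ℝ) (C : Set S) : Prop :=
  ∀ s ∈ C, ∑ s' ∈ Finset.univ.filter (· ∈ C), P s s' = 1

/-- A closed communicating class: a nonempty closed set all of whose states
communicate with each other. -/
def IsCCC {S : Type*} [Fintype S] [DecidableEq S] (P : S → S → ℝ) (C : Set S) : Prop :=
  C.Nonempty ∧ IsClosedSet P C ∧ ∀ s ∈ C, ∀ s' ∈ C, Accessible P s s'

open Function Filter ENNReal

section MarkovChain

variable {S : Type*} {P : S → S → ℝ}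

def pathCylinder (f : ℕ → S) (n : ℕ) : Set (ℕ → S) := {ω | ∀ i ≤ n, ω i = f i}

theorem pathCylinder_update (f : ℕ → S) (n : ℕ) (t : S) :
    pathCylinder (update f (n + 1) t) n = pathCylinder f n := by
  ext ω
  exact forall₂_congr fun i hi => by rw [update_of_ne (by omega)]

variable [Fintype S]

theorem IsClosedSet.mem_of_pos (hP0 : ∀ s s', 0 ≤ P s s') (hP1 : ∀ s, ∑ s', P s s' = 1)
    {C : Set S} (hC : IsClosedSet P C) {s t : S} (hs : s ∈ C) (hst : 0 < P s t) : t ∈ C := by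
  by_contra htC
  have hout : ∑ t' ∈ univ.filter (· ∉ C), P s t' = 0 := by
    have := sum_filter_add_sum_filter_not univ (· ∈ C) (P s)
    rw [hC s hs, hP1 s] at this
    linarith
  have := (sum_eq_zero_iff_of_nonneg fun x _ => hP0 s x).1 hout t (by simp [htC])
  linarith

/-- `avoidProb P A m s` is the probability that the chain started at `s` avoids `A` at
times `0, …, m`. -/
noncomputable def avoidProb (P : S → S → ℝ) (A : Set S) : ℕ → S → ℝ
  | 0, s => if s ∈ A then 0 else 1
  | m + 1, s => if s ∈ A then 0 else ∑ t, P s t * avoidProb P A m t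

section AvoidProb

variable {A : Set S}

theorem avoidProb_of_mem {s : S} (hs : s ∈ A) (m : ℕ) : avoidProb P A m s = 0 := by
  cases m <;> simp [avoidProb, hs]

theorem avoidProb_nonneg (hP0 : ∀ s s', 0 ≤ P s s') (m : ℕ) (s : S) : 0 ≤ avoidProb P A m s := by
  induction m generalizing s with
  | zero => unfold avoidProb; split_ifs <;> norm_num
  | succ m ih =>
    unfold avoidProb
    split_ifs
    exacts [le_rfl, sum_nonneg fun t _ => mul_nonneg (hP0 s t) (ih t)]

theorem avoidProb_zero_le_one (s : S) : avoidProb P A 0 s ≤ 1 := by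
  unfold avoidProb; split_ifs <;> norm_num

theorem avoidProb_succ_le (hP0 : ∀ s s', 0 ≤ P s s') (hP1 : ∀ s, ∑ s', P s s' = 1) (m : ℕ)
    (s : S) : avoidProb P A (m + 1) s ≤ avoidProb P A m s := by
  induction m generalizing s with
  | zero =>
    rw [avoidProb, avoidProb]
    split_ifs
    · rfl
    calc ∑ t, P s t * avoidProb P A 0 t ≤ ∑ t, P s t :=
          sum_le_sum fun t _ => mul_le_of_le_one_right (hP0 s t) (avoidProb_zero_le_one t)
      _ = 1 := hP1 s
  | succ m ih =>
    rw [avoidProb, avoidProb]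
    split_ifs
    · rfl
    exact sum_le_sum fun t _ => mul_le_mul_of_nonneg_left (ih t) (hP0 s t)

theorem avoidProb_antitone (hP0 : ∀ s s', 0 ≤ P s s') (hP1 : ∀ s, ∑ s', P s s' = 1) (s : S) :
    Antitone (avoidProb P A · s) :=
  antitone_nat_of_succ_le fun m => avoidProb_succ_le hP0 hP1 m s

theorem avoidProb_le_one (hP0 : ∀ s s', 0 ≤ P s s') (hP1 : ∀ s, ∑ s', P s s' = 1) (m : ℕ)
    (s : S) : avoidProb P A m s ≤ 1 :=
  (avoidProb_antitone hP0 hP1 s (Nat.zero_le m)).trans (avoidProb_zero_le_one s)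

theorem avoidProb_add_le (hP0 : ∀ s s', 0 ≤ P s s') {b : ℕ} {B : ℝ}
    (hB : ∀ t, avoidProb P A b t ≤ B) (a : ℕ) (s : S) :
    avoidProb P A (a + b) s ≤ avoidProb P A a s * B := by
  by_cases hs : s ∈ A
  · simp [avoidProb_of_mem hs]
  induction a generalizing s with
  | zero => simpa [avoidProb, hs] using hB s
  | succ a ih =>
    rw [add_right_comm, avoidProb, avoidProb, if_neg hs, if_neg hs, sum_mul]
    refine sum_le_sum fun t _ => ?_
    by_cases ht : t ∈ A
    · simp [avoidProb_of_mem ht]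
    rw [mul_assoc]
    exact mul_le_mul_of_nonneg_left (ih t ht) (hP0 s t)

theorem avoidProb_mul_le_pow (hP0 : ∀ s s', 0 ≤ P s s') {N : ℕ} {r : ℝ} (hr : 0 ≤ r)
    (hN : ∀ t, avoidProb P A N t ≤ r) (q : ℕ) (s : S) : avoidProb P A (q * N) s ≤ r ^ q := by
  induction q generalizing s with
  | zero => simpa using avoidProb_zero_le_one s
  | succ q ih =>
    rw [Nat.succ_mul, pow_succ]
    exact (avoidProb_add_le hP0 hN _ s).trans (mul_le_mul_of_nonneg_right (ih s) hr)

end AvoidProb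

variable [DecidableEq S]

theorem accessible_iff_reflTransGen (hP0 : ∀ s s', 0 ≤ P s s') {s t : S} :
    Accessible P s t ↔ Relation.ReflTransGen (fun a b => 0 < P a b) s t := by
  have hpow := Matrix.pow_apply_nonneg (A := Matrix.of P) hP0
  constructor
  · rintro ⟨n, hn⟩
    induction n generalizing t with
    | zero =>
      obtain rfl : s = t := by
        by_contra h
        simp [Matrix.one_apply_ne h] at hn
      exact .refl
    | succ n ih =>
      rw [pow_succ, Matrix.mul_apply] at hn
      obtain ⟨u, -, hu⟩ :=
        (sum_pos_iff_of_nonneg fun u _ => mul_nonneg (hpow n s u) (hP0 u t)).1 hn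
      exact (ih (pos_of_mul_pos_left hu (hP0 u t))).tail (pos_of_mul_pos_right hu (hpow n s u))
  · intro h
    induction h with
    | refl => exact ⟨0, by simp⟩
    | @tail b c _ hbc ih =>
      obtain ⟨n, hn⟩ := ih
      refine ⟨n + 1, ?_⟩
      rw [pow_succ, Matrix.mul_apply]
      exact (sum_pos_iff_of_nonneg fun u _ => mul_nonneg (hpow n s u) (hP0 u c)).2
        ⟨b, mem_univ b, mul_pos hn hbc⟩

theorem Accessible.refl (s : S) : Accessible P s s := ⟨0, by simp⟩

theorem Accessible.trans (hP0 : ∀ s s', 0 ≤ P s s') {s t u : S}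
    (hst : Accessible P s t) (htu : Accessible P t u) : Accessible P s u := by
  rw [accessible_iff_reflTransGen hP0] at *
  exact hst.trans htu

theorem Accessible.tail (hP0 : ∀ s s', 0 ≤ P s s') {s t u : S}
    (hst : Accessible P s t) (htu : 0 < P t u) : Accessible P s u := by
  rw [accessible_iff_reflTransGen hP0] at *
  exact hst.tail htu

theorem accessible_of_le (hP0 : ∀ s s', 0 ≤ P s s') {ω : ℕ → S}
    (hω : ∀ n, 0 < P (ω n) (ω (n + 1))) {n m : ℕ} (hnm : n ≤ m) : Accessible P (ω n) (ω m) := by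
  induction m, hnm using Nat.le_induction with
  | base => exact .refl _
  | succ m _ ih => exact ih.tail hP0 (hω m)

theorem IsClosedSet.mem_of_accessible (hP0 : ∀ s s', 0 ≤ P s s')
    (hP1 : ∀ s, ∑ s', P s s' = 1) {C : Set S} (hC : IsClosedSet P C) {s t : S} (hs : s ∈ C)
    (hst : Accessible P s t) : t ∈ C := by
  rw [accessible_iff_reflTransGen hP0] at hst
  induction hst with
  | refl => exact hs
  | tail _ hbc ih => exact hC.mem_of_pos hP0 hP1 ih hbc

/-- In a finite chain the essential states are exactly the recurrent ones. -/
def IsEssential (P : S → S → ℝ) (s : S) : Prop :=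
  ∀ t, Accessible P s t → Accessible P t s

theorem exists_isEssential_accessible (hP0 : ∀ s s', 0 ≤ P s s') (s : S) :
    ∃ t, IsEssential P t ∧ Accessible P s t := by
  let reach : S → Finset S := fun t => univ.filter (Accessible P t)
  have mem_reach {t u : S} : u ∈ reach t ↔ Accessible P t u := by simp [reach]
  -- A state accessible from `s` whose set of accessible states is smallest is essential.
  obtain ⟨t, hst, hmin⟩ :=
    (reach s).exists_min_image (fun t => #(reach t)) ⟨s, mem_reach.2 (.refl s)⟩
  rw [mem_reach] at hst
  refine ⟨t, fun u htu => ?_, hst⟩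
  have hsub : reach u ⊆ reach t := fun v hv => mem_reach.2 (htu.trans hP0 (mem_reach.1 hv))
  have heq := eq_of_subset_of_card_le hsub (hmin u (mem_reach.2 (hst.trans hP0 htu)))
  exact mem_reach.1 (heq ▸ mem_reach.2 (.refl t))

theorem IsEssential.isCCC (hP0 : ∀ s s', 0 ≤ P s s') (hP1 : ∀ s, ∑ s', P s s' = 1) {t : S}
    (ht : IsEssential P t) : IsCCC P {u | Accessible P t u} := by
  refine ⟨⟨t, .refl t⟩, fun u hu => ?_, fun u hu v hv => (ht u hu).trans hP0 hv⟩
  rw [sum_filter_of_ne fun v _ hv => ?_, hP1 u]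
  exact Accessible.tail hP0 hu ((hP0 u v).lt_of_ne' hv)

theorem exists_avoidProb_lt_one (hP0 : ∀ s s', 0 ≤ P s s') (hP1 : ∀ s, ∑ s', P s s' = 1)
    {A : Set S} {s : S} (hA : ∃ u ∈ A, Accessible P s u) : ∃ n, avoidProb P A n s < 1 := by
  obtain ⟨u, hu, hsu⟩ := hA
  rw [accessible_iff_reflTransGen hP0] at hsu
  induction hsu using Relation.ReflTransGen.head_induction_on with
  | refl => exact ⟨0, by simp [avoidProb, hu]⟩
  | @head s v hsv _ ih =>
    obtain ⟨n, hn⟩ := ih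
    refine ⟨n + 1, ?_⟩
    rw [avoidProb]
    split_ifs
    · exact one_pos
    calc ∑ t, P s t * avoidProb P A n t < ∑ t, P s t :=
          sum_lt_sum (fun t _ => mul_le_of_le_one_right (hP0 s t) (avoidProb_le_one hP0 hP1 n t))
            ⟨v, mem_univ v, mul_lt_of_lt_one_right hsv hn⟩
      _ = 1 := hP1 s

theorem exists_avoidProb_le_pow (hP0 : ∀ s s', 0 ≤ P s s') (hP1 : ∀ s, ∑ s', P s s' = 1)
    {A : Set S} (hA : ∀ s, ∃ u ∈ A, Accessible P s u) :
    ∃ r, 0 ≤ r ∧ r < 1 ∧ ∃ N, ∀ q s, avoidProb P A (q * N) s ≤ r ^ q := by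
  choose n hn using fun s => exists_avoidProb_lt_one hP0 hP1 (hA s)
  have hN : ∀ s, avoidProb P A (univ.sup n) s < 1 := fun s =>
    (avoidProb_antitone hP0 hP1 s (le_sup (mem_univ s))).trans_lt (hn s)
  obtain ⟨r, hr, hr01⟩ := ((eventually_all.2 fun s => (lt_mem_nhds (hN s)).filter_mono
    nhdsWithin_le_nhds).and (Ioo_mem_nhdsLT zero_lt_one)).exists
  exact ⟨r, hr01.1.le, hr01.2, _, avoidProb_mul_le_pow hP0 hr01.1.le fun s => (hr s).le⟩

section PathMeasure

variable [MeasurableSpace S] {s0 : S} {μ : Measure (ℕ → S)}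

theorem measure_pathCylinder (hμ : IsPathMeasure P s0 μ) (f : ℕ → S) (n : ℕ) :
    μ (pathCylinder f n) =
      if f 0 = s0 then ENNReal.ofReal (∏ i ∈ range n, P (f i) (f (i + 1))) else 0 :=
  hμ n f

theorem measure_pathCylinder_succ (hP0 : ∀ s s', 0 ≤ P s s') (hμ : IsPathMeasure P s0 μ)
    (f : ℕ → S) (n : ℕ) :
    μ (pathCylinder f (n + 1)) = μ (pathCylinder f n) * ENNReal.ofReal (P (f n) (f (n + 1))) := by
  rw [measure_pathCylinder hμ, measure_pathCylinder hμ]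
  split_ifs
  · rw [prod_range_succ, ofReal_mul (prod_nonneg fun i _ => hP0 _ _)]
  · rw [zero_mul]

theorem ae_eq_start (hμ : IsPathMeasure P s0 μ) : ∀ᵐ ω ∂μ, ω 0 = s0 := by
  have hnull : μ (⋃ s, ⋃ (_ : s ≠ s0), pathCylinder (fun _ => s) 0) = 0 :=
    measure_iUnion_null fun s => measure_iUnion_null fun hs => by
      rw [measure_pathCylinder hμ, if_neg hs]
  refine measure_mono_null (fun ω (hω : ω 0 ≠ s0) => mem_iUnion₂.2 ⟨ω 0, hω, fun i hi => ?_⟩) hnull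
  rw [Nat.le_zero.1 hi]

theorem exists_pathCylinder_pos (hP0 : ∀ s s', 0 ≤ P s s') (hμ : IsPathMeasure P s0 μ) {s : S}
    (hs : Accessible P s0 s) : ∃ n f, f n = s ∧ 0 < μ (pathCylinder f n) := by
  rw [accessible_iff_reflTransGen hP0] at hs
  induction hs with
  | refl => exact ⟨0, fun _ => s0, rfl, by simp [measure_pathCylinder hμ]⟩
  | @tail b c _ hbc ih =>
    obtain ⟨n, f, hfn, hpos⟩ := ih
    refine ⟨n + 1, update f (n + 1) c, update_self .., ?_⟩
    rw [measure_pathCylinder_succ hP0 hμ, pathCylinder_update, update_self,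
      update_of_ne (by omega), hfn]
    exact ENNReal.mul_pos hpos.ne' (ofReal_pos.2 hbc).ne'

/-- The Markov property on cylinders, in the form of a one-step upper bound. -/
theorem measure_pathCylinder_inter_le (hP0 : ∀ s s', 0 ≤ P s s') (hμ : IsPathMeasure P s0 μ)
    {E : Set (ℕ → S)} {c : S → ℝ} (hc : ∀ t, 0 ≤ c t) (f : ℕ → S) (n : ℕ)
    (h : ∀ t, μ (pathCylinder (update f (n + 1) t) (n + 1) ∩ E) ≤
      μ (pathCylinder (update f (n + 1) t) (n + 1)) * ENNReal.ofReal (c t)) :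
    μ (pathCylinder f n ∩ E) ≤ μ (pathCylinder f n) * ENNReal.ofReal (∑ t, P (f n) t * c t) := by
  have hcover : pathCylinder f n ∩ E ⊆ ⋃ t, pathCylinder (update f (n + 1) t) (n + 1) ∩ E := by
    rintro ω ⟨hω, hωE⟩
    refine mem_iUnion.2 ⟨ω (n + 1), fun i hi => ?_, hωE⟩
    rcases hi.lt_or_eq with hi | rfl
    · rw [update_of_ne (by omega)]
      exact hω i (by omega)
    · rw [update_self]
  calc μ (pathCylinder f n ∩ E)
      ≤ ∑ t, μ (pathCylinder (update f (n + 1) t) (n + 1) ∩ E) :=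
        (measure_mono hcover).trans (measure_iUnion_fintype_le μ _)
    _ ≤ ∑ t, μ (pathCylinder f n) * (ENNReal.ofReal (P (f n) t) * ENNReal.ofReal (c t)) := by
        gcongr with t
        refine (h t).trans_eq ?_
        rw [measure_pathCylinder_succ hP0 hμ, pathCylinder_update, update_self,
          update_of_ne (by omega), mul_assoc]
    _ = μ (pathCylinder f n) * ENNReal.ofReal (∑ t, P (f n) t * c t) := by
        rw [← mul_sum, ofReal_sum_of_nonneg fun t _ => mul_nonneg (hP0 _ _) (hc t)]
        simp_rw [ofReal_mul (hP0 _ _)]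

theorem measure_le_of_forall_pathCylinder (hP0 : ∀ s s', 0 ≤ P s s')
    (hP1 : ∀ s, ∑ s', P s s' = 1) (hμ : IsPathMeasure P s0 μ) {E : Set (ℕ → S)} {c : ℝ}
    (hc : 0 ≤ c) {N : ℕ}
    (h : ∀ f, μ (pathCylinder f N ∩ E) ≤ μ (pathCylinder f N) * ENNReal.ofReal c) :
    μ E ≤ ENNReal.ofReal c := by
  have hprefix : ∀ n ≤ N, ∀ f,
      μ (pathCylinder f n ∩ E) ≤ μ (pathCylinder f n) * ENNReal.ofReal c := by
    intro n hn
    induction hn using Nat.decreasingInduction with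
    | self => exact h
    | of_succ n _ ih =>
      intro f
      simpa [← sum_mul, hP1] using
        measure_pathCylinder_inter_le hP0 hμ (fun _ => hc) f n fun t => ih _
  calc μ E ≤ μ (pathCylinder (fun _ => s0) 0 ∩ E) :=
        measure_mono_ae <| (ae_eq_start hμ).mono fun ω h0 hω =>
          ⟨fun i hi => by rw [Nat.le_zero.1 hi, h0], hω⟩
    _ ≤ μ (pathCylinder (fun _ => s0) 0) * ENNReal.ofReal c := hprefix 0 (Nat.zero_le N) _
    _ = ENNReal.ofReal c := by simp [measure_pathCylinder hμ]

theorem ae_transition_pos (hP0 : ∀ s s', 0 ≤ P s s') (hP1 : ∀ s, ∑ s', P s s' = 1)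
    (hμ : IsPathMeasure P s0 μ) : ∀ᵐ ω ∂μ, ∀ n, 0 < P (ω n) (ω (n + 1)) := by
  refine ae_all_iff.2 fun n => ?_
  rw [ae_iff, ← nonpos_iff_eq_zero, ← ofReal_zero]
  refine measure_le_of_forall_pathCylinder hP0 hP1 hμ le_rfl (N := n + 1) fun f => ?_
  rw [ofReal_zero, mul_zero, nonpos_iff_eq_zero]
  by_cases hf : 0 < P (f n) (f (n + 1))
  · refine measure_mono_null (fun ω ⟨hω, hbad⟩ => ?_) measure_empty
    exact hbad (by rwa [hω n (by omega), hω (n + 1) le_rfl])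
  · refine measure_mono_null Set.inter_subset_left ?_
    rw [measure_pathCylinder_succ hP0 hμ, ofReal_eq_zero.2 (not_lt.1 hf), mul_zero]

theorem measure_pathCylinder_inter_avoid_le (hP0 : ∀ s s', 0 ≤ P s s')
    (hμ : IsPathMeasure P s0 μ) (A : Set S) (m n : ℕ) (f : ℕ → S) :
    μ (pathCylinder f n ∩ {ω | ∀ j ∈ Set.Icc n (n + m), ω j ∉ A}) ≤
      μ (pathCylinder f n) * ENNReal.ofReal (avoidProb P A m (f n)) := by
  by_cases hfn : f n ∈ A
  · refine (measure_mono_null ?_ measure_empty).trans_le zero_le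
    rintro ω ⟨hω, hωA⟩
    exact hωA n ⟨le_rfl, by omega⟩ (hω n le_rfl ▸ hfn)
  induction m generalizing n f with
  | zero =>
    simpa [avoidProb, hfn] using measure_mono Set.inter_subset_left
  | succ m ih =>
    rw [avoidProb, if_neg hfn]
    refine measure_pathCylinder_inter_le hP0 hμ (avoidProb_nonneg hP0 m) f n fun t => ?_
    by_cases ht : t ∈ A
    · simp only [avoidProb_of_mem ht, ofReal_zero, mul_zero, nonpos_iff_eq_zero]
      refine measure_mono_null (fun ω ⟨hω, hωA⟩ => ?_) measure_empty
      refine hωA (n + 1) ⟨by omega, by omega⟩ ?_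
      rwa [hω (n + 1) le_rfl, update_self]
    calc _ ≤ μ (pathCylinder (update f (n + 1) t) (n + 1) ∩
            {ω | ∀ j ∈ Set.Icc (n + 1) (n + 1 + m), ω j ∉ A}) :=
          measure_mono <| Set.inter_subset_inter_right _
            fun ω (hω : ∀ j ∈ Set.Icc n (n + (m + 1)), ω j ∉ A) j ⟨_, _⟩ =>
              hω j ⟨by omega, by omega⟩
      _ ≤ _ := ih (n + 1) _ (by rwa [update_self])
      _ = _ := by rw [update_self]

theorem ae_infinite_visits (hP0 : ∀ s s', 0 ≤ P s s') (hP1 : ∀ s, ∑ s', P s s' = 1)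
    (hμ : IsPathMeasure P s0 μ) {A : Set S} (hA : ∀ s, ∃ u ∈ A, Accessible P s u) :
    ∀ᵐ ω ∂μ, {n | ω n ∈ A}.Infinite := by
  obtain ⟨r, hr0, hr1, N, hN⟩ := exists_avoidProb_le_pow hP0 hP1 hA
  have hnull (n : ℕ) : μ {ω | ∀ j ∈ Set.Ici n, ω j ∉ A} = 0 := by
    refine nonpos_iff_eq_zero.1 (ofReal_zero ▸ ge_of_tendsto'
      (ENNReal.tendsto_ofReal (tendsto_pow_atTop_nhds_zero_of_lt_one hr0 hr1)) fun q => ?_)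
    calc μ {ω | ∀ j ∈ Set.Ici n, ω j ∉ A} ≤ μ {ω | ∀ j ∈ Set.Icc n (n + q * N), ω j ∉ A} :=
          measure_mono fun ω hω j hj => hω j hj.1
      _ ≤ ENNReal.ofReal (r ^ q) :=
          measure_le_of_forall_pathCylinder hP0 hP1 hμ (pow_nonneg hr0 q) fun f =>
            (measure_pathCylinder_inter_avoid_le hP0 hμ A _ n f).trans
              (by gcongr; exact hN q (f n))
  rw [ae_iff]
  refine measure_mono_null (fun ω (hω : ¬ _) => ?_) (measure_iUnion_null hnull)
  obtain ⟨b, hb⟩ := (not_infinite.1 hω).bddAbove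
  exact mem_iUnion.2 ⟨b + 1, fun j (hj : b + 1 ≤ j) hjA => absurd (hb hjA) (by omega)⟩

theorem ae_infinite_visits_of_isCCC (hP0 : ∀ s s', 0 ≤ P s s') (hP1 : ∀ s, ∑ s', P s s' = 1)
    (hμ : IsPathMeasure P s0 μ) {C : Set S} (hC : IsCCC P C) :
    ∀ᵐ ω ∂μ, (∃ n, ω n ∈ C) → ∀ k ∈ C, {n | ω n = k}.Infinite := by
  -- Hitting `insert k Cᶜ` infinitely often forces infinitely many visits to `k` once in `C`.
  have hvisit : ∀ᵐ ω ∂μ, ∀ k ∈ C, {n | ω n ∈ insert k Cᶜ}.Infinite := by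
    refine ae_all_iff.2 fun k => eventually_imp_distrib_left.2 fun hk =>
      ae_infinite_visits hP0 hP1 hμ fun s => ?_
    by_cases hs : s ∈ C
    · exact ⟨k, mem_insert k _, hC.2.2 s hs k hk⟩
    · exact ⟨s, mem_insert_of_mem k hs, .refl s⟩
  filter_upwards [ae_transition_pos hP0 hP1 hμ, hvisit] with ω hstep hvisit ⟨n, hn⟩ k hk
  have hstay (m : ℕ) (hm : n ≤ m) : ω m ∈ C :=
    hC.2.1.mem_of_accessible hP0 hP1 hn (accessible_of_le hP0 hstep hm)
  refine ((hvisit k hk).sdiff (finite_Iio n)).mono fun m hm => ?_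
  exact hm.1.resolve_right fun h => h (hstay m (not_lt.1 hm.2))

theorem exists_isCCC_of_measure_pos (hP0 : ∀ s s', 0 ≤ P s s')
    (hP1 : ∀ s, ∑ s', P s s' = 1) (hμ : IsPathMeasure P s0 μ) {K L : Set S}
    (hpos : 0 < μ {ω | {n | ω n ∈ K}.Infinite ∧ {n | ω n ∈ L}.Finite}) :
    ∃ C : Set S, IsCCC P C ∧ (C ∩ K).Nonempty ∧ C ∩ L = ∅ ∧ ∃ s ∈ C, Accessible P s0 s := by
  have hclass : ∀ᵐ ω ∂μ, ∀ t, IsEssential P t → (∃ n, ω n ∈ {u | Accessible P t u}) →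
      ∀ k ∈ {u | Accessible P t u}, {n | ω n = k}.Infinite :=
    ae_all_iff.2 fun t => eventually_imp_distrib_left.2 fun ht =>
      ae_infinite_visits_of_isCCC hP0 hP1 hμ (ht.isCCC hP0 hP1)
  have hessential : ∀ᵐ ω ∂μ, {n | ω n ∈ {t | IsEssential P t}}.Infinite :=
    ae_infinite_visits hP0 hP1 hμ fun s =>
      (exists_isEssential_accessible hP0 s).imp fun _ ht => ⟨ht.1, ht.2⟩
  obtain ⟨ω, ⟨hK, hL⟩, hω0, hstep, hvisit, hclass⟩ :=
    ((frequently_ae_mem_iff.2 hpos.ne').and_eventually ((ae_eq_start hμ).and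
      ((ae_transition_pos hP0 hP1 hμ).and (hessential.and hclass)))).exists
  obtain ⟨n, hn⟩ := hvisit.nonempty
  have hstay (m : ℕ) (hm : n ≤ m) : Accessible P (ω n) (ω m) := accessible_of_le hP0 hstep hm
  refine ⟨_, hn.isCCC hP0 hP1, ?_, ?_, ω n, .refl _, hω0 ▸ accessible_of_le hP0 hstep n.zero_le⟩
  · obtain ⟨m, hmK, hm⟩ := hK.exists_gt n
    exact ⟨ω m, hstay m hm.le, hmK⟩
  · refine Set.eq_empty_of_forall_notMem fun k ⟨hkC, hkL⟩ => ?_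
    exact (hclass _ hn ⟨n, .refl _⟩ k hkC).mono
      (fun m (hm : ω m = k) => show ω m ∈ L from hm ▸ hkL) hL

theorem measure_pos_of_isCCC (hP0 : ∀ s s', 0 ≤ P s s') (hP1 : ∀ s, ∑ s', P s s' = 1)
    (hμ : IsPathMeasure P s0 μ) {K L C : Set S} (hC : IsCCC P C) (hK : (C ∩ K).Nonempty)
    (hL : C ∩ L = ∅) {s : S} (hs : s ∈ C) (hacc : Accessible P s0 s) :
    0 < μ {ω | {n | ω n ∈ K}.Infinite ∧ {n | ω n ∈ L}.Finite} := by
  obtain ⟨k, hkC, hkK⟩ := hK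
  obtain ⟨n, f, hfn, hpos⟩ := exists_pathCylinder_pos hP0 hμ hacc
  refine hpos.trans_le (measure_mono_ae ?_)
  filter_upwards [ae_transition_pos hP0 hP1 hμ, ae_infinite_visits_of_isCCC hP0 hP1 hμ hC]
    with ω hstep hvisit hcyl
  have hωn : ω n = s := (hcyl n le_rfl).trans hfn
  have hstay (m : ℕ) (hm : n ≤ m) : ω m ∈ C :=
    hC.2.1.mem_of_accessible hP0 hP1 hs (hωn ▸ accessible_of_le hP0 hstep hm)
  refine ⟨(hvisit ⟨n, hωn ▸ hs⟩ k hkC).mono fun m (hm : ω m = k) => show ω m ∈ K from hm ▸ hkK,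
    (finite_Iio n).subset fun m (hm : ω m ∈ L) => ?_⟩
  by_contra hmn
  exact (Set.eq_empty_iff_forall_notMem.1 hL) (ω m) ⟨hstay m (not_lt.1 hmn), hm⟩

end PathMeasure

end MarkovChain

theorem rabin_pos_prob_iff_accessible_feasible_class_general
    {S : Type*} [Fintype S] [DecidableEq S]
    [MeasurableSpace S]
    (P : S → S → ℝ) (hP0 : ∀ s s', 0 ≤ P s s') (hP1 : ∀ s, ∑ s', P s s' = 1)
    (K L : Set S) (s0 : S)
    (μ : Measure (ℕ → S))
    (hμ : IsPathMeasure P s0 μ) :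
    0 < μ {ω | {n | ω n ∈ K}.Infinite ∧ {n | ω n ∈ L}.Finite} ↔
      ∃ C : Set S, IsCCC P C ∧ (C ∩ K).Nonempty ∧ C ∩ L = ∅ ∧
        ∃ s ∈ C, Accessible P s0 s :=
  ⟨exists_isCCC_of_measure_pos hP0 hP1 hμ, fun ⟨_, hC, hK, hL, _, hs, hacc⟩ =>
    measure_pos_of_isCCC hP0 hP1 hμ hC hK hL hs hacc⟩

/-- Proposition 1: the Rabin acceptance condition holds with positive probability
iff some closed communicating class accessible from `s0` meets `K` and avoids `L`. -/
theorem rabin_pos_prob_iff_accessible_feasible_class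
    {S : Type*} [Fintype S] [Nonempty S] [DecidableEq S]
    [MeasurableSpace S] [MeasurableSingletonClass S]
    (P : S → S → ℝ) (hP0 : ∀ s s', 0 ≤ P s s') (hP1 : ∀ s, ∑ s', P s s' = 1)
    (K L : Set S) (s0 : S)
    (μ : Measure (ℕ → S)) [IsProbabilityMeasure μ]
    (hμ : IsPathMeasure P s0 μ) :
    0 < μ {ω | {n | ω n ∈ K}.Infinite ∧ {n | ω n ∈ L}.Finite} ↔
      ∃ C : Set S, IsCCC P C ∧ (C ∩ K).Nonempty ∧ C ∩ L = ∅ ∧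
        ∃ s ∈ C, Accessible P s0 s :=
  rabin_pos_prob_iff_accessible_feasible_class_general P hP0 hP1 K L s0 μ hμ
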